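/- arXiv:1708.09294 — 2 statements merged into one kernel-verified Lean document; each statement's English description precedes it below -/
import Mathlib

section
/- Let J be the (non-periodic) characteristic interval corresponding to the pair of partitions (𝒯, 𝒯̃) obtained from the maximal splitting of 𝒯̂, and let Ĵ be the periodic characteristic interval corresponding to (𝒯̂, 𝒯̃̂). Then |J| ∼ |Ĵ|, with implied constants depending only on k. -/
open MeasureTheory Set
open scoped ENNReal NNReal

noncomputable section

/-- The measure on the torus `𝕋`, identified with `[0,1)`. -/
def μ01 : Measure ℝ := volume.restrict (Set.Ico 0 1)

/-- `f` is a periodic (1-periodic) spline of order `k` with knot multiplicity function `m`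
(the knots are the points of `[0,1)` where `m` is nonzero, counted with multiplicity `m`).
We use the right-continuous representatives. -/
def IsPeriodicSpline (k : ℕ) (m : ℝ → ℕ) (f : ℝ → ℝ) : Prop :=
  (∀ x, f (x + 1) = f x) ∧
  (∀ a b : ℝ, (∀ x ∈ Set.Ioo a b, m (Int.fract x) = 0) →
    ∃ P : Polynomial ℝ, P.degree < (k : WithBot ℕ) ∧ ∀ x ∈ Set.Ioo a b, f x = P.eval x) ∧
  (∀ x : ℝ, m (Int.fract x) < k → ContDiffAt ℝ (k - 1 - m (Int.fract x)) f x) ∧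
  (∀ x : ℝ, ContinuousWithinAt f (Set.Ici x) x)

/-- A periodic knot sequence `(σ_j)_{j∈ℤ}` of period `n` (i.e. `σ_{j+n} = σ_j + 1`),
with `0 ≤ σ_0 ≤ ⋯ ≤ σ_{n-1} < 1` and knot multiplicities at most `k`. -/
structure PKnots (k n : ℕ) where
  σ : ℤ → ℝ
  mono : Monotone σ
  per : ∀ j, σ (j + (n : ℤ)) = σ j + 1
  sep : ∀ j, σ j < σ (j + (k : ℤ))
  lo : 0 ≤ σ 0
  hi : σ ((n : ℤ) - 1) < 1

variable {k n : ℕ}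

/-- multiplicity of a point `x` in the knot sequence. -/
def PKnots.mult (K : PKnots k n) (x : ℝ) : ℕ :=
  Set.ncard {j : ℤ | 0 ≤ j ∧ j < (n : ℤ) ∧ K.σ j = x}

def PKnots.IsSpline (K : PKnots k n) (f : ℝ → ℝ) : Prop :=
  IsPeriodicSpline k K.mult f

/-- length of the support of the `j`-th B-spline. -/
def PKnots.ν (K : PKnots k n) (j : ℤ) : ℝ := K.σ (j + (k : ℤ)) - K.σ j

/-- `(N_i)_{i∈ℤ}` is the family of `L^∞`-normalized periodic B-splines of order `k`:
each `N_i` is a spline, the family is `n`-periodic in the index, `N_i` is nonnegative and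
nonzero, `N_i` is supported (as a function on the torus) in `[σ_i, σ_{i+k}]`, and the
family forms a partition of unity. -/
def IsBSplineFamily (K : PKnots k n) (N : ℤ → ℝ → ℝ) : Prop :=
  (∀ i, K.IsSpline (N i)) ∧
  (∀ i, N (i + (n : ℤ)) = N i) ∧
  (∀ i x, 0 ≤ N i x) ∧
  (∀ i, ∃ x, N i x ≠ 0) ∧
  (∀ i x, N i x ≠ 0 → ∃ r : ℤ, x + (r : ℝ) ∈ Set.Icc (K.σ i) (K.σ (i + (k : ℤ)))) ∧
  (∀ x, ∑ i ∈ Finset.Ico (0 : ℤ) (n : ℤ), N i x = 1)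

/-- `(Nd_i)` is the dual basis (inside the periodic spline space) to the B-spline family
`(N_i)`, biorthogonal in `L²(𝕋)`. -/
def IsDualFamily (K : PKnots k n) (N Nd : ℤ → ℝ → ℝ) : Prop :=
  (∀ i, K.IsSpline (Nd i)) ∧
  (∀ i, Nd (i + (n : ℤ)) = Nd i) ∧
  (∀ i j : ℤ, i ∈ Finset.Ico (0 : ℤ) (n : ℤ) → j ∈ Finset.Ico (0 : ℤ) (n : ℤ) →
    ∫ x in Set.Ico (0 : ℝ) 1, Nd i x * N j x = if i = j then 1 else 0)

/-- the coefficients `α̂_j` of the periodic orthogonal spline function corresponding to the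
removal of the knot `σ_{i0}`. -/
def alphaHat (K : PKnots k n) (i0 j : ℤ) : ℝ :=
  (-1 : ℝ) ^ (j - i0 + (k : ℤ)) *
    (∏ ℓ ∈ Finset.Ico (i0 - (k : ℤ) + 1) j, (K.σ i0 - K.σ ℓ) / (K.σ (ℓ + (k : ℤ)) - K.σ ℓ)) *
    (∏ ℓ ∈ Finset.Ico (j + 1) i0, (K.σ (ℓ + (k : ℤ)) - K.σ i0) / (K.σ (ℓ + (k : ℤ)) - K.σ ℓ))

/-- the periodic orthogonal spline function `ĝ = Σ_{j=i0-k}^{i0} α̂_j N̂_j^*`. -/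
def gHat (K : PKnots k n) (Nd : ℤ → ℝ → ℝ) (i0 : ℤ) : ℝ → ℝ :=
  fun x => ∑ j ∈ Finset.Icc (i0 - (k : ℤ)) i0, alphaHat K i0 j * Nd j x

/-- `[A,B]` is a characteristic interval corresponding to the knot `σ_{i0}`. -/
def IsCharInterval (K : PKnots k n) (i0 : ℤ) (A B : ℝ) : Prop :=
  ∃ j0 ∈ Finset.Icc (i0 - (k : ℤ)) i0,
    (∀ ℓ ∈ Finset.Icc (i0 - (k : ℤ)) i0, K.ν j0 ≤ 2 * K.ν ℓ) ∧
    (∀ j ∈ Finset.Icc (i0 - (k : ℤ)) i0,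
      (∀ ℓ ∈ Finset.Icc (i0 - (k : ℤ)) i0, K.ν j ≤ 2 * K.ν ℓ) →
      |alphaHat K i0 j| ≤ |alphaHat K i0 j0|) ∧
    ∃ l0 : ℕ, l0 < k ∧
      (∀ l : ℕ, l < k →
        K.σ (j0 + (l : ℤ) + 1) - K.σ (j0 + (l : ℤ)) ≤ K.σ (j0 + (l0 : ℤ) + 1) - K.σ (j0 + (l0 : ℤ))) ∧
      A = K.σ (j0 + (l0 : ℤ)) ∧ B = K.σ (j0 + (l0 : ℤ) + 1)

/-- periodic distance of indices `i, j ∈ {0, …, n-1}`. -/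
def pdist (n : ℕ) (i j : ℤ) : ℕ := min (i - j).natAbs (n - (i - j).natAbs)

/-- The arc `[a,b]` (as an interval on the torus) contains the arcs `[A,B]` and `[A',B']`. -/
def ArcContains (a b A B A' B' : ℝ) : Prop :=
  (∃ r : ℤ, Set.Icc (A + (r : ℝ)) (B + (r : ℝ)) ⊆ Set.Icc a b) ∧
  (∃ r : ℤ, Set.Icc (A' + (r : ℝ)) (B' + (r : ℝ)) ⊆ Set.Icc a b)

/-- The arc `[a,b] ⊂ 𝕋` is minimal under inclusion among intervals of the torus
containing the arcs `[A,B]` and `[A',B']`. -/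
def IsMinArc (a b A B A' B' : ℝ) : Prop :=
  a ≤ b ∧ b - a ≤ 1 ∧ ArcContains a b A B A' B' ∧
  ∀ a' b' : ℝ, a' ≤ b' → (∃ r : ℤ, a ≤ a' + (r : ℝ) ∧ b' + (r : ℝ) ≤ b) →
    ArcContains a' b' A B A' B' → b - a ≤ b' - a'

/-- number of knots of the knot sequence (counted with multiplicity) lying on the
arc `[a,b]` of the torus. -/
def knotCount (K : PKnots k n) (a b : ℝ) : ℕ :=
  Set.ncard {j : ℤ | 0 ≤ j ∧ j < (n : ℤ) ∧ ∃ r : ℤ, K.σ j + (r : ℝ) ∈ Set.Icc a b}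

/-- the subset of `[0,1)` corresponding to the arc `[a,b]` of the torus. -/
def arcSet (a b : ℝ) : Set ℝ := {x | x ∈ Set.Ico (0 : ℝ) 1 ∧ ∃ r : ℤ, x + (r : ℝ) ∈ Set.Icc a b}

/-- the subset of `[0,1)` corresponding to the open arc `(a,b)` of the torus. -/
def arcSetO (a b : ℝ) : Set ℝ := {x | x ∈ Set.Ico (0 : ℝ) 1 ∧ ∃ r : ℤ, x + (r : ℝ) ∈ Set.Ioo a b}

/-- the non-periodic partition of `[0,1]` obtained from the splitting of a periodic
partition at `0`: boundary knots get multiplicity `k`. -/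
def tauOf (K : PKnots k n) : ℤ → ℝ :=
  fun j => if j < 0 then 0 else if j < (n : ℤ) then K.σ j else 1

/-- the coefficients `α_j` of the non-periodic orthogonal spline function corresponding
to the knots `tauOf K` and the removal of `τ_{i0}`. -/
def alphaNP (K : PKnots k n) (i0 j : ℤ) : ℝ :=
  (-1 : ℝ) ^ (j - i0 + (k : ℤ)) *
    (∏ ℓ ∈ Finset.Ico (i0 - (k : ℤ) + 1) j,
      (tauOf K i0 - tauOf K ℓ) / (tauOf K (ℓ + (k : ℤ)) - tauOf K ℓ)) *
    (∏ ℓ ∈ Finset.Ico (j + 1) i0,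
      (tauOf K (ℓ + (k : ℤ)) - tauOf K i0) / (tauOf K (ℓ + (k : ℤ)) - tauOf K ℓ))

/-- the periodic partition is normalized so that the splitting at `0` is the maximal
splitting: `σ_0 = 1 - σ_{n-1} = (1/2) max_j (σ_j - σ_{j-1})`. -/
def IsMaxSplit (K : PKnots k n) : Prop :=
  (∀ j ∈ Finset.Ico (0 : ℤ) (n : ℤ), K.σ j - K.σ (j - 1) ≤ 2 * K.σ 0) ∧
  (∃ j ∈ Finset.Ico (0 : ℤ) (n : ℤ), K.σ j - K.σ (j - 1) = 2 * K.σ 0) ∧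
  1 - K.σ ((n : ℤ) - 1) = K.σ 0

/-- `[A,B]` is a characteristic interval for the non-periodic partition `tauOf K`
corresponding to the knot `τ_{i0}`. -/
def IsCharIntervalNP (K : PKnots k n) (i0 : ℤ) (A B : ℝ) : Prop :=
  ∃ j0 ∈ Finset.Icc (i0 - (k : ℤ)) i0,
    (∀ ℓ ∈ Finset.Icc (i0 - (k : ℤ)) i0,
      tauOf K (j0 + (k : ℤ)) - tauOf K j0 ≤ 2 * (tauOf K (ℓ + (k : ℤ)) - tauOf K ℓ)) ∧
    (∀ j ∈ Finset.Icc (i0 - (k : ℤ)) i0,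
      (∀ ℓ ∈ Finset.Icc (i0 - (k : ℤ)) i0,
        tauOf K (j + (k : ℤ)) - tauOf K j ≤ 2 * (tauOf K (ℓ + (k : ℤ)) - tauOf K ℓ)) →
      |alphaNP K i0 j| ≤ |alphaNP K i0 j0|) ∧
    ∃ l0 : ℕ, l0 < k ∧
      (∀ l : ℕ, l < k →
        tauOf K (j0 + (l : ℤ) + 1) - tauOf K (j0 + (l : ℤ)) ≤
          tauOf K (j0 + (l0 : ℤ) + 1) - tauOf K (j0 + (l0 : ℤ))) ∧
      A = tauOf K (j0 + (l0 : ℤ)) ∧ B = tauOf K (j0 + (l0 : ℤ) + 1)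

/-- `s` is an admissible sequence of knots in the torus `𝕋 = [0,1)`: dense and each point
occurs at most `k` times. -/
def IsAdmissible (k : ℕ) (s : ℕ → ℝ) : Prop :=
  (∀ n, s n ∈ Set.Ico (0 : ℝ) 1) ∧
  (∀ x ∈ Set.Icc (0 : ℝ) 1, ∀ ε > 0, ∃ n, |s n - x| < ε) ∧
  (∀ x : ℝ, ∀ F : Finset ℕ, (∀ m ∈ F, s m = x) → F.card ≤ k)

/-- `K` is the increasing enumeration of the first `n` points `s_0, …, s_{n-1}`. -/
def Enumerates (s : ℕ → ℝ) (n : ℕ) (K : PKnots k n) : Prop :=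
  ∀ x : ℝ, {j : ℤ | 0 ≤ j ∧ j < (n : ℤ) ∧ K.σ j = x}.ncard = {m : ℕ | m < n ∧ s m = x}.ncard

/-- `[A n, B n]` is a characteristic interval `Ĵ_n` corresponding to the new knot
`s_{n-1}` in the partition formed by `s_0, …, s_{n-1}` (for every `n ≥ 2k`). -/
def HasCharIntervals (k : ℕ) (s : ℕ → ℝ) (A B : ℕ → ℝ) : Prop :=
  ∀ n : ℕ, 2 * k ≤ n → ∃ K : PKnots k n, Enumerates s n K ∧
    ∃ i0 : ℤ, 0 ≤ i0 ∧ i0 < (n : ℤ) ∧ K.σ i0 = s (n - 1) ∧ IsCharInterval K i0 (A n) (B n)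

/-- the multiplicity function of the knot set `{s_0, …, s_{n-1}}`. -/
def multUpTo (s : ℕ → ℝ) (n : ℕ) (x : ℝ) : ℕ := {m : ℕ | m < n ∧ s m = x}.ncard

/-- `(f_n)_{n ≥ 1}` is the periodic orthonormal spline system of order `k` corresponding to
the point sequence `(s_j)_{j ≥ 0}`:  `(f_n)_{n=1}^k` is an orthonormal basis of the spline
space on the knots `s_0, …, s_{k-1}`, and for `n ≥ k+1`, `f_n` is a unit vector in the spline
space on `s_0, …, s_{n-1}` orthogonal to the spline space on `s_0, …, s_{n-2}`. -/
def IsONSplineSystem (k : ℕ) (s : ℕ → ℝ) (f : ℕ → ℝ → ℝ) : Prop :=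
  (∀ m n : ℕ, 1 ≤ m → 1 ≤ n →
    ∫ x in Set.Ico (0 : ℝ) 1, f m x * f n x = if m = n then 1 else 0) ∧
  (∀ n, 1 ≤ n → n ≤ k → IsPeriodicSpline k (multUpTo s k) (f n)) ∧
  (∀ g : ℝ → ℝ, IsPeriodicSpline k (multUpTo s k) g →
    ∃ c : ℕ → ℝ, ∀ x, g x = ∑ i ∈ Finset.Icc 1 k, c i * f i x) ∧
  (∀ n, k + 1 ≤ n → IsPeriodicSpline k (multUpTo s n) (f n) ∧
    (∀ g : ℝ → ℝ, IsPeriodicSpline k (multUpTo s (n - 1)) g →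
      ∫ x in Set.Ico (0 : ℝ) 1, f n x * g x = 0))

end

/-!
Both characteristic intervals are longest knot intervals inside a B-spline support
`[σ_{j₀}, σ_{j₀+k}]`, so each is comparable, within the factor `k`, to the length of its support;
and both supports are chosen among the supports of the window `i0 - k ≤ ℓ ≤ i0` of length at most
twice the minimal one. It therefore suffices to compare, for each `ℓ` in the window, the periodic
support length `ν ℓ` with its split version, which is `ν ℓ` clamped to `[0, 1]`. Maximality of the
splitting bounds every knot gap by `2σ₀`, so a support in the window reaches at most
`(2k - 1)σ₀` beyond `[0, 1]` while keeping length at least `σ₀` inside it; clamping therefore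
shrinks it by at most the factor `2k`.
-/

theorem sub_le_mul_of_forall_sub_pred_le (f : ℤ → ℝ) {d : ℝ} {a b : ℤ} (hab : a ≤ b)
    (h : ∀ j, a < j → j ≤ b → f j - f (j - 1) ≤ d) : f b - f a ≤ (b - a) * d := by
  induction b, hab using Int.leInduction with
  | base => simp
  | succ b hab ih =>
    have hstep := h (b + 1) (by omega) le_rfl
    have hprev := ih fun j hj hjb => h j hj (by omega)
    push_cast
    rw [add_sub_cancel_right] at hstep
    linarith

theorem Monotone.sub_le_mul_sub_of_forall_le {f : ℤ → ℝ} (hf : Monotone f) {k : ℕ} (j : ℤ)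
    {l₀ : ℕ} (hl₀ : l₀ < k)
    (hmax : ∀ l : ℕ, l < k → f (j + l + 1) - f (j + l) ≤ f (j + l₀ + 1) - f (j + l₀)) :
    f (j + l₀ + 1) - f (j + l₀) ≤ f (j + k) - f j ∧
      f (j + k) - f j ≤ k * (f (j + l₀ + 1) - f (j + l₀)) := by
  refine ⟨by linarith [hf (show j + l₀ + 1 ≤ j + k by omega), hf (show j ≤ j + l₀ by omega)], ?_⟩
  have htel : ∑ l ∈ Finset.range k, (f (j + (l + 1 : ℕ)) - f (j + l)) = f (j + k) - f j := by
    simpa using Finset.sum_range_sub (fun l : ℕ => f (j + l)) k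
  calc f (j + k) - f j = ∑ l ∈ Finset.range k, (f (j + l + 1) - f (j + l)) := by
        rw [← htel]; push_cast; simp only [add_assoc]
    _ ≤ ∑ _l ∈ Finset.range k, (f (j + l₀ + 1) - f (j + l₀)) :=
        Finset.sum_le_sum fun l hl => hmax l (Finset.mem_range.1 hl)
    _ = k * (f (j + l₀ + 1) - f (j + l₀)) := by
        rw [Finset.sum_const, Finset.card_range, nsmul_eq_mul]

theorem clamp_sub_clamp_le {x y : ℝ} (hxy : x ≤ y) :
    max 0 (min y 1) - max 0 (min x 1) ≤ y - x := by
  rcases le_total x 0 with hx | hx <;> rcases le_total y 1 with hy | hy <;>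
    simp only [max_def, min_def] <;> split_ifs <;> linarith

theorem sub_le_mul_clamp_sub_clamp {c x y κ : ℝ} (hκ : 1 ≤ κ) (hc : 0 ≤ c) (hc₁ : 2 * c ≤ 1)
    (hxy : x ≤ y) (hx : x ≤ 1 - c) (hy : c ≤ y)
    (hxlo : -((2 * κ - 1) * c) ≤ x) (hyhi : y ≤ 1 + (2 * κ - 1) * c) :
    y - x ≤ 2 * κ * (max 0 (min y 1) - max 0 (min x 1)) := by
  rcases le_total x 0 with hx0 | hx0 <;> rcases le_total y 1 with hy1 | hy1 <;>
    simp only [max_def, min_def] <;> split_ifs <;> nlinarith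

namespace PKnots

variable {k n : ℕ} (K : PKnots k n)

theorem tauOf_eq_clamp (j : ℤ) : tauOf K j = max 0 (min (K.σ j) 1) := by
  have hper := K.per j
  unfold tauOf
  split_ifs with hneg hlt
  · have : K.σ (j + n) ≤ K.σ (n - 1) := K.mono (by omega)
    rw [min_eq_left (by linarith [K.hi]), max_eq_left (by linarith [K.hi])]
  · have h0 : K.σ 0 ≤ K.σ j := K.mono (by omega)
    have h1 : K.σ j ≤ K.σ (n - 1) := K.mono (by omega)
    rw [min_eq_left (by linarith [K.hi]), max_eq_right (by linarith [K.lo])]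
  · have : K.σ (0 + n) ≤ K.σ j := K.mono (by omega)
    rw [min_eq_right (by linarith [K.per 0, K.lo]), max_eq_right zero_le_one]

theorem tauOf_mono : Monotone (tauOf K) := fun i j hij => by
  simp only [tauOf_eq_clamp]
  gcongr
  exact K.mono hij

theorem tauOf_sub_le_sub {i j : ℤ} (hij : i ≤ j) : tauOf K j - tauOf K i ≤ K.σ j - K.σ i := by
  simp only [tauOf_eq_clamp]
  exact clamp_sub_clamp_le (K.mono hij)

end PKnots

namespace IsMaxSplit

variable {k n : ℕ} {K : PKnots k n}

theorem sigma_sub_le (h : IsMaxSplit K) {a b : ℤ} (ha : 0 ≤ a) (hab : a ≤ b)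
    (hb : b < n) : K.σ b - K.σ a ≤ (b - a) * (2 * K.σ 0) :=
  sub_le_mul_of_forall_sub_pred_le K.σ hab fun j hj hjb =>
    h.1 j (Finset.mem_Ico.2 ⟨by omega, by omega⟩)

theorem neg_le_sigma (h : IsMaxSplit K) (hk : 0 < k) (hkn : k ≤ n) {ℓ : ℤ}
    (hℓ : -k ≤ ℓ) : -((2 * k - 1) * K.σ 0) ≤ K.σ ℓ := by
  have hlast := K.per (-1)
  have hfirst := K.per (-k)
  rw [show (-1 : ℤ) + n = n - 1 by ring] at hlast
  have hgaps := h.sigma_sub_le (a := -k + n) (b := n - 1) (by omega) (by omega) (by omega)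
  have hmono := K.mono hℓ
  push_cast at hgaps
  linarith [h.2.2]

theorem sigma_le (h : IsMaxSplit K) (hk : 0 < k) (hkn : k ≤ n) {ℓ : ℤ}
    (hℓ : ℓ ≤ n + k - 1) : K.σ ℓ ≤ 1 + (2 * k - 1) * K.σ 0 := by
  have hfirst := K.per 0
  have hlast := K.per (k - 1)
  rw [show (k : ℤ) - 1 + n = n + k - 1 by ring] at hlast
  have hgaps := h.sigma_sub_le (a := 0) (b := k - 1) le_rfl (by omega) (by omega)
  have hmono := K.mono hℓ
  push_cast at hgaps hfirst
  linarith

theorem sigma_sub_le_two_mul_tauOf_sub (h : IsMaxSplit K) (hk : 0 < k)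
    (hkn : k ≤ n) {i0 ℓ : ℤ} (hi0 : 0 ≤ i0) (hi0n : i0 < n) (hℓ : ℓ ∈ Finset.Icc (i0 - k) i0) :
    K.σ (ℓ + k) - K.σ ℓ ≤ 2 * k * (tauOf K (ℓ + k) - tauOf K ℓ) := by
  obtain ⟨hℓlo, hℓhi⟩ := Finset.mem_Icc.1 hℓ
  have hfirst_le_last : K.σ 0 ≤ K.σ (n - 1) := K.mono (by omega)
  simp only [PKnots.tauOf_eq_clamp]
  refine sub_le_mul_clamp_sub_clamp (by exact_mod_cast hk) K.lo (by linarith [h.2.2])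
    (K.mono (by omega)) ?_ (K.mono (by omega)) (h.neg_le_sigma hk hkn (by omega))
    (h.sigma_le hk hkn (by omega))
  linarith [h.2.2, K.mono (show ℓ ≤ n - 1 by omega)]

end IsMaxSplit

section CharInterval

variable {k n : ℕ} {K : PKnots k n} {i0 : ℤ} {A B : ℝ}

theorem IsCharInterval.exists_support_bounds (h : IsCharInterval K i0 A B) :
    ∃ j0 ∈ Finset.Icc (i0 - k) i0, (∀ ℓ ∈ Finset.Icc (i0 - k) i0, K.ν j0 ≤ 2 * K.ν ℓ) ∧
      B - A ≤ K.ν j0 ∧ K.ν j0 ≤ k * (B - A) := by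
  obtain ⟨j0, hj0, hmin, -, l0, hl0, hmax, rfl, rfl⟩ := h
  exact ⟨j0, hj0, hmin, K.mono.sub_le_mul_sub_of_forall_le j0 hl0 hmax⟩

theorem IsCharIntervalNP.exists_support_bounds (h : IsCharIntervalNP K i0 A B) :
    ∃ j0 ∈ Finset.Icc (i0 - k) i0,
      (∀ ℓ ∈ Finset.Icc (i0 - k) i0,
        tauOf K (j0 + k) - tauOf K j0 ≤ 2 * (tauOf K (ℓ + k) - tauOf K ℓ)) ∧
      B - A ≤ tauOf K (j0 + k) - tauOf K j0 ∧ tauOf K (j0 + k) - tauOf K j0 ≤ k * (B - A) := by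
  obtain ⟨j0, hj0, hmin, -, l0, hl0, hmax, rfl, rfl⟩ := h
  exact ⟨j0, hj0, hmin, K.tauOf_mono.sub_le_mul_sub_of_forall_le j0 hl0 hmax⟩

end CharInterval

/-- **Comparison of periodic and non-periodic characteristic intervals.**  For the maximal
splitting of a periodic partition `𝒯̂`, the non-periodic characteristic interval `J`
(for the split partition `𝒯` and removed knot `τ_{i0}`) and the periodic characteristic
interval `Ĵ` (for `𝒯̂` and `σ_{i0}`) satisfy `|J| ∼ |Ĵ|`, with constants depending only
on `k`. -/
theorem stmt9 (k : ℕ) (hk : 0 < k) :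
    ∃ c₁ c₂ : ℝ, 0 < c₁ ∧ 0 < c₂ ∧
    ∀ n : ℕ, 2 * k ≤ n → ∀ K : PKnots k n, IsMaxSplit K →
    ∀ i0 : ℤ, 0 ≤ i0 → i0 < (n : ℤ) →
    ∀ A B A' B' : ℝ, IsCharInterval K i0 A B → IsCharIntervalNP K i0 A' B' →
      c₁ * (B - A) ≤ B' - A' ∧ B' - A' ≤ c₂ * (B - A) := by
  refine ⟨1 / (4 * k ^ 2), 2 * k, by positivity, by positivity, ?_⟩
  intro n hn K hK i0 hi0 hi0n A B A' B' hJ hJ'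
  obtain ⟨j, hj, hj_min, hJ_le, hle_J⟩ := hJ.exists_support_bounds
  obtain ⟨j', hj', hj'_min, hJ'_le, hle_J'⟩ := hJ'.exists_support_bounds
  have hsplit := hK.sigma_sub_le_two_mul_tauOf_sub hk (by omega) hi0 hi0n hj'
  have hclamp := K.tauOf_sub_le_sub (show j ≤ j + k by omega)
  have hmin := hj_min j' hj'
  have hmin' := hj'_min j hj
  unfold PKnots.ν at *
  constructor
  · rw [div_mul_eq_mul_div, one_mul, div_le_iff₀ (by positivity)]
    calc B - A ≤ 2 * (K.σ (j' + k) - K.σ j') := by linarith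
      _ ≤ 2 * (2 * k * (tauOf K (j' + k) - tauOf K j')) := by gcongr
      _ ≤ 2 * (2 * k * (k * (B' - A'))) := by gcongr
      _ = (B' - A') * (4 * k ^ 2) := by ring
  · calc B' - A' ≤ 2 * (tauOf K (j + k) - tauOf K j) := by linarith
      _ ≤ 2 * (K.σ (j + k) - K.σ j) := by gcongr
      _ ≤ 2 * k * (B - A) := by linarith
end

section
/- Let V be an arbitrary subinterval of 𝕋 and let β > 0. Then there exists a constant F_{k,β} depending only on k and β such that card{n ≥ 2k : Ĵ_n ⊆ V and |Ĵ_n| ≥ β|V|} ≤ F_{k,β}. -/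
open MeasureTheory Set
open scoped ENNReal NNReal

/-!
The characteristic interval `Ĵ_n` is a longest knot interval of a B-spline support `[σ_j, σ_{j+k}]`
containing the new knot `s_{n-1}`, so that support has length at most `k |Ĵ_n|`; after shifting
`Ĵ_n` into `V`, the knot `s_{n-1}` lies within `k |V|` of `V`. The support-length comparability in
the choice of `j` forces the `k` knots on either side of `s_{n-1}` to lie at distance
`≥ |Ĵ_n| / 2 ≥ β |V| / 2`, so fewer than `2k` of the knots `s_0, …, s_{n-1}` lie that close to
`s_{n-1}`. Cutting the `k |V|`-neighbourhood of `V` into `⌈2 (2k + 1) / β⌉ + 1` buckets of width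
`β |V| / 2`, a bucket with more than `2k` indices `n` would violate this for its largest index.
-/

theorem Set.ncard_le_of_forall_finset_subset {α : Type*} {S : Set α} {c : ℕ}
    (h : ∀ T : Finset α, ↑T ⊆ S → T.card ≤ c) : S.ncard ≤ c := by
  rcases S.finite_or_infinite with hS | hS
  · simpa [Set.ncard_eq_toFinset_card _ hS] using h hS.toFinset (by simp)
  · obtain ⟨T, hTS, hT⟩ := hS.exists_subset_card_eq (c + 1)
    have := h T hTS
    omega

section Buckets

variable {R : Type*} [Field R] [LinearOrder R] [IsStrictOrderedRing R] [FloorRing R]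

theorem abs_sub_lt_of_floor_div_eq {x y c w : R} (hw : 0 < w)
    (h : ⌊(x - c) / w⌋ = ⌊(y - c) / w⌋) : |x - y| < w := by
  have := Int.abs_sub_lt_one_of_floor_eq_floor h
  rwa [← sub_div, sub_sub_sub_cancel_right, abs_div, abs_of_pos hw, div_lt_one hw] at this

/-- Pigeonhole on the buckets `⌊(Y n - c) / w⌋`: in each bucket, the largest index sees all the
others at distance `< w`. -/
theorem Set.ncard_le_of_forall_card_near_le {ι : Type*} [LinearOrder ι] {S : Set ι} {Y : ι → R}
    {c w : R} {N p : ℕ} (hw : 0 < w) (hY : ∀ n ∈ S, Y n ∈ Icc c (c + N * w))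
    (hnear : ∀ n ∈ S, ∀ F : Finset ι, (∀ m ∈ F, m ∈ S ∧ m < n ∧ |Y m - Y n| < w) →
      F.card ≤ p) :
    S.ncard ≤ (N + 1) * (p + 1) := by
  classical
  set bucket : ι → ℤ := fun n => ⌊(Y n - c) / w⌋
  have bucket_mem : ∀ n ∈ S, bucket n ∈ Finset.Icc (0 : ℤ) N := by
    intro n hn
    obtain ⟨hc, hcN⟩ := hY n hn
    rw [Finset.mem_Icc, Int.floor_nonneg, Int.floor_le_iff]
    constructor
    · exact div_nonneg (by linarith) hw.le
    · rw [div_lt_iff₀ hw]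
      push_cast
      linarith
  have card_bucket_le : ∀ T : Finset ι, ↑T ⊆ S → ∀ i : ℤ,
      (T.filter (bucket · = i)).card ≤ p + 1 := by
    intro T hTS i
    set U := T.filter (bucket · = i)
    rcases U.eq_empty_or_nonempty with hU | hU
    · simp [hU]
    have hmax := U.max'_mem hU
    have hrest : (U.erase (U.max' hU)).card ≤ p := by
      refine hnear _ (hTS (Finset.mem_filter.mp hmax).1) _ fun m hm => ?_
      obtain ⟨hne, hmU⟩ := Finset.mem_erase.mp hm
      refine ⟨hTS (Finset.mem_filter.mp hmU).1, lt_of_le_of_ne (U.le_max' m hmU) hne, ?_⟩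
      exact abs_sub_lt_of_floor_div_eq hw
        ((Finset.mem_filter.mp hmU).2.trans (Finset.mem_filter.mp hmax).2.symm)
    rw [Finset.card_erase_of_mem hmax] at hrest
    omega
  refine Set.ncard_le_of_forall_finset_subset fun T hTS => ?_
  calc T.card = ∑ i ∈ Finset.Icc (0 : ℤ) N, (T.filter (bucket · = i)).card :=
        Finset.card_eq_sum_card_fiberwise fun n hn => bucket_mem n (hTS hn)
    _ ≤ ∑ _i ∈ Finset.Icc (0 : ℤ) N, (p + 1) :=
        Finset.sum_le_sum fun i _ => card_bucket_le T hTS i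
    _ = (N + 1) * (p + 1) := by simp

end Buckets

namespace PKnots

variable {k n : ℕ} (K : PKnots k n)

theorem σ_add_mul (j q : ℤ) : K.σ (j + q * n) = K.σ j + q := by
  induction q using Int.induction_on with
  | zero => simp
  | succ q ih =>
    rw [add_one_mul, ← add_assoc, K.per, ih]
    push_cast
    ring
  | pred q ih =>
    have h := K.per (j + (-(q : ℤ) - 1) * n)
    rw [add_assoc, ← add_one_mul, sub_add_cancel, ih] at h
    push_cast at h ⊢
    linarith

theorem gap_le_ν (j : ℤ) {l : ℕ} (hl : l < k) :
    K.σ (j + l + 1) - K.σ (j + l) ≤ K.ν j := by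
  have h₁ : K.σ j ≤ K.σ (j + l) := K.mono (by omega)
  have h₂ : K.σ (j + l + 1) ≤ K.σ (j + k) := K.mono (by omega)
  rw [PKnots.ν]
  linarith

theorem ν_le_mul_of_gap_le (j : ℤ) {g : ℝ}
    (h : ∀ l < k, K.σ (j + l + 1) - K.σ (j + l) ≤ g) : K.ν j ≤ k * g := by
  have tele := Finset.sum_range_sub (fun l : ℕ => K.σ (j + l)) k
  push_cast at tele
  simp only [← add_assoc, add_zero] at tele
  rw [PKnots.ν, ← tele]
  calc ∑ l ∈ Finset.range k, (K.σ (j + l + 1) - K.σ (j + l))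
      ≤ ∑ _l ∈ Finset.range k, g := Finset.sum_le_sum fun l hl => h l (Finset.mem_range.mp hl)
    _ = k * g := by simp

/-- Translating each such knot by a whole number of periods lands its index in
`(i0 - k, i0 + k)`. -/
theorem card_near_le {i0 : ℤ} {δ : ℝ} (hleft : δ ≤ K.σ i0 - K.σ (i0 - k))
    (hright : δ ≤ K.σ (i0 + k) - K.σ i0) {T : Finset ℤ}
    (hT : ∀ j ∈ T, 0 ≤ j ∧ j < n ∧ ∃ d : ℤ, |K.σ j + d - K.σ i0| < δ) :
    T.card ≤ 2 * k - 1 := by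
  have hsub : T ⊆ (Finset.Ioo (i0 - k) (i0 + k)).image (· % (n : ℤ)) := by
    intro j hj
    obtain ⟨hj0, hjn, d, hd⟩ := hT j hj
    rw [abs_lt] at hd
    have hσ : K.σ (j + d * n) = K.σ j + d := K.σ_add_mul j d
    refine Finset.mem_image.mpr ⟨j + d * n, Finset.mem_Ioo.mpr ⟨?_, ?_⟩, ?_⟩
    · by_contra! hle
      linarith [K.mono hle]
    · by_contra! hle
      linarith [K.mono hle]
    · rw [Int.add_mul_emod_self_right, Int.emod_eq_of_lt hj0 hjn]
  calc T.card ≤ (Finset.Ioo (i0 - k) (i0 + k)).card :=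
        (Finset.card_le_card hsub).trans Finset.card_image_le
    _ = 2 * k - 1 := by rw [Int.card_Ioo]; omega

end PKnots

section CharIntervals

variable {k n : ℕ} {K : PKnots k n} {i0 : ℤ} {A B : ℝ}

theorem IsCharInterval.exists_support (h : IsCharInterval K i0 A B) :
    ∃ j0 : ℤ, i0 - k ≤ j0 ∧ j0 ≤ i0 ∧ (∀ ℓ ∈ Finset.Icc (i0 - k) i0, K.ν j0 ≤ 2 * K.ν ℓ) ∧
      K.σ j0 ≤ A ∧ B ≤ K.σ (j0 + k) ∧ B - A ≤ K.ν j0 ∧ K.ν j0 ≤ k * (B - A) := by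
  obtain ⟨j0, hj0, hcomp, -, l0, hl0, hmax, rfl, rfl⟩ := h
  obtain ⟨hj0l, hj0r⟩ := Finset.mem_Icc.mp hj0
  exact ⟨j0, hj0l, hj0r, hcomp, K.mono (by omega), K.mono (by omega), K.gap_le_ν j0 hl0,
    K.ν_le_mul_of_gap_le j0 hmax⟩

theorem IsCharInterval.lt (h : IsCharInterval K i0 A B) : A < B := by
  obtain ⟨j0, -, -, -, -, -, -, hν⟩ := h.exists_support
  have hpos : 0 < K.ν j0 := sub_pos.mpr (K.sep j0)
  by_contra! hBA
  linarith [mul_nonpos_of_nonneg_of_nonpos (Nat.cast_nonneg k) (sub_nonpos.mpr hBA)]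

theorem IsCharInterval.sub_le_two_mul_ν (h : IsCharInterval K i0 A B) {ℓ : ℤ}
    (hℓ : ℓ ∈ Finset.Icc (i0 - k) i0) : B - A ≤ 2 * K.ν ℓ := by
  obtain ⟨j0, -, -, hcomp, -, -, hν, -⟩ := h.exists_support
  linarith [hcomp ℓ hℓ]

theorem IsCharInterval.σ_mem_Icc (h : IsCharInterval K i0 A B) :
    K.σ i0 ∈ Icc (B - k * (B - A)) (A + k * (B - A)) := by
  obtain ⟨j0, hj0l, hj0r, -, hA, hB, -, hν⟩ := h.exists_support
  have h₁ : K.σ j0 ≤ K.σ i0 := K.mono hj0r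
  have h₂ : K.σ i0 ≤ K.σ (j0 + k) := K.mono (by omega)
  rw [PKnots.ν] at hν
  constructor <;> linarith

end CharIntervals

theorem Enumerates.card_le_card_filter {k n : ℕ} {s : ℕ → ℝ} {K : PKnots k n}
    (hK : Enumerates s n K) {F : Finset ℕ} (hF : ∀ m ∈ F, m < n) :
    F.card ≤ ((Finset.Ico 0 (n : ℤ)).filter (fun j => K.σ j ∈ F.image s)).card := by
  have hfiber : ∀ v, (F.filter (s · = v)).card ≤
      ((Finset.Ico 0 (n : ℤ)).filter (K.σ · = v)).card := by
    intro v
    have e₁ : {m | m < n ∧ s m = v} = ↑((Finset.range n).filter (s · = v)) := by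
      ext; simp
    have e₂ : {j : ℤ | 0 ≤ j ∧ j < n ∧ K.σ j = v} =
        ↑((Finset.Ico 0 (n : ℤ)).filter (K.σ · = v)) := by
      ext; simp [and_assoc]
    calc (F.filter (s · = v)).card ≤ ((Finset.range n).filter (s · = v)).card :=
          Finset.card_le_card fun m hm => by
            simp only [Finset.mem_filter, Finset.mem_range] at hm ⊢
            exact ⟨hF m hm.1, hm.2⟩
      _ = ((Finset.Ico 0 (n : ℤ)).filter (K.σ · = v)).card := by
          rw [← Set.ncard_coe_finset, ← Set.ncard_coe_finset, ← e₁, ← e₂, hK v]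
  calc F.card = ∑ v ∈ F.image s, (F.filter (s · = v)).card := Finset.card_eq_sum_card_image s F
    _ ≤ ∑ v ∈ F.image s, ((Finset.Ico 0 (n : ℤ)).filter (K.σ · = v)).card :=
        Finset.sum_le_sum fun v _ => hfiber v
    _ = _ := by
        rw [Finset.card_eq_sum_card_fiberwise
          (s := (Finset.Ico 0 (n : ℤ)).filter (fun j => K.σ j ∈ F.image s)) (f := K.σ)
          (t := F.image s) fun j hj => (Finset.mem_filter.mp hj).2]
        refine Finset.sum_congr rfl fun v hv => ?_
        rw [Finset.filter_filter]
        exact congrArg Finset.card (Finset.filter_congr fun j _ => by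
          constructor
          · rintro rfl; exact ⟨hv, rfl⟩
          · exact fun h => h.2)

namespace HasCharIntervals

variable {k : ℕ} {s A B : ℕ → ℝ} {n : ℕ}

theorem lt (h : HasCharIntervals k s A B) (hn : 2 * k ≤ n) : A n < B n := by
  obtain ⟨K, -, i0, -, -, -, hc⟩ := h n hn
  exact hc.lt

theorem new_knot_mem_Icc (h : HasCharIntervals k s A B) (hn : 2 * k ≤ n) :
    s (n - 1) ∈ Icc (B n - k * (B n - A n)) (A n + k * (B n - A n)) := by
  obtain ⟨K, -, i0, -, -, hσ, hc⟩ := h n hn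
  exact hσ ▸ hc.σ_mem_Icc

theorem card_near_new_knot_le (h : HasCharIntervals k s A B) (hn : 2 * k ≤ n) {F : Finset ℕ}
    (hF : ∀ m ∈ F, m < n ∧ ∃ d : ℤ, |s m + d - s (n - 1)| < (B n - A n) / 2) :
    F.card ≤ 2 * k - 1 := by
  obtain ⟨K, hK, i0, -, -, hσ, hc⟩ := h n hn
  refine (hK.card_le_card_filter fun m hm => (hF m hm).1).trans
    (K.card_near_le (i0 := i0) (δ := (B n - A n) / 2) ?_ ?_ ?_)
  · have := hc.sub_le_two_mul_ν (ℓ := i0 - k) (Finset.mem_Icc.mpr ⟨le_rfl, by omega⟩)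
    rw [PKnots.ν, sub_add_cancel] at this
    linarith
  · have := hc.sub_le_two_mul_ν (ℓ := i0) (Finset.mem_Icc.mpr ⟨by omega, le_rfl⟩)
    rw [PKnots.ν] at this
    linarith
  · intro j hj
    obtain ⟨⟨hj0, hjn⟩, hjF⟩ := Finset.mem_filter.mp hj |>.imp_left Finset.mem_Ico.mp
    obtain ⟨m, hm, hsm⟩ := Finset.mem_image.mp hjF
    obtain ⟨d, hd⟩ := (hF m hm).2
    exact ⟨hj0, hjn, d, by rwa [← hsm, hσ]⟩

end HasCharIntervals

/-- **Combinatorics of periodic characteristic intervals.**  Let `V` be a subinterval of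
the torus and `β > 0`.  There is a constant `F_{k,β}` depending only on `k` and `β` such
that the number of indices `n ≥ 2k` with `Ĵ_n ⊆ V` and `|Ĵ_n| ≥ β |V|` is at most
`F_{k,β}`. -/
theorem stmt14 (k : ℕ) (hk : 0 < k) (β : ℝ) (hβ : 0 < β) :
    ∃ F : ℕ,
    ∀ s : ℕ → ℝ, IsAdmissible k s →
    ∀ A B : ℕ → ℝ, HasCharIntervals k s A B →
    ∀ a b : ℝ, a ≤ b → b - a ≤ 1 →
      {n : ℕ | 2 * k ≤ n ∧
        (∃ r : ℤ, Set.Icc (A n + (r : ℝ)) (B n + (r : ℝ)) ⊆ Set.Icc a b) ∧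
        β * (b - a) ≤ B n - A n}.ncard ≤ F := by
  refine ⟨(⌈2 * (2 * k + 1) / β⌉₊ + 1) * (2 * k - 1 + 1), ?_⟩
  intro s _ A B hAB a b _ _
  set S := {n : ℕ | 2 * k ≤ n ∧
    (∃ r : ℤ, Set.Icc (A n + (r : ℝ)) (B n + (r : ℝ)) ⊆ Set.Icc a b) ∧
    β * (b - a) ≤ B n - A n}
  choose! r hr using fun n (hn : n ∈ S) => hn.2.1
  have hshift : ∀ n ∈ S, a ≤ A n + r n ∧ B n + r n ≤ b := fun n hn =>
    (Set.Icc_subset_Icc_iff (by linarith [hAB.lt hn.1])).mp (hr n hn)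
  rcases S.eq_empty_or_nonempty with hS | ⟨n₀, hn₀⟩
  · simp [hS]
  have hL : 0 < b - a := by linarith [hshift n₀ hn₀, hAB.lt hn₀.1]
  have hN : 2 * (2 * k + 1) ≤ ⌈2 * (2 * k + 1) / β⌉₊ * β :=
    (div_le_iff₀ hβ).mp (Nat.le_ceil _)
  refine Set.ncard_le_of_forall_card_near_le (Y := fun n => s (n - 1) + r n)
    (c := a - k * (b - a)) (w := β * (b - a) / 2) (by positivity) ?_ ?_
  · intro n hn
    obtain ⟨hlo, hhi⟩ := hAB.new_knot_mem_Icc hn.1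
    obtain ⟨ha, hb⟩ := hshift n hn
    have hlen : k * (B n - A n) ≤ k * (b - a) :=
      mul_le_mul_of_nonneg_left (by linarith) (Nat.cast_nonneg k)
    constructor <;> nlinarith [mul_le_mul_of_nonneg_right hN hL.le, hAB.lt hn.1]
  · intro n hn F hF
    have hinj : Set.InjOn (· - 1) (F : Set ℕ) := fun m hm m' hm' h => by
      have : 2 * k ≤ m := (hF m hm).1.1
      have : 2 * k ≤ m' := (hF m' hm').1.1
      simp only at h
      omega
    rw [← Finset.card_image_of_injOn hinj]
    refine hAB.card_near_new_knot_le hn.1 fun m' hm' => ?_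
    obtain ⟨m, hm, rfl⟩ := Finset.mem_image.mp hm'
    obtain ⟨-, hmn, hclose⟩ := hF m hm
    refine ⟨by omega, r m - r n, ?_⟩
    push_cast
    calc |s (m - 1) + (r m - r n) - s (n - 1)| = |s (m - 1) + r m - (s (n - 1) + r n)| := by
          ring_nf
      _ < β * (b - a) / 2 := hclose
      _ ≤ (B n - A n) / 2 := by linarith [hn.2.2]
end
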